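/- arXiv:2305.10575 — 4 statements merged into one kernel-verified Lean document; each statement's English description precedes it below -/
import Mathlib

section
/- There exist universal constants C > 0 and k ≥ 1 such that for every n ≥ 2 and every integer a ≥ 1, every matrix A ∈ ℤ^{n×n} whose entries satisfy |A_{ij}| ≤ 2^a and which has at least two distinct complex eigenvalues satisfies mindgap(A) ≥ 2^{−C a n² (log₂(n a + 2))^k}. -/
/-!
If `A v = λ v` and `wᵀ A = μ wᵀ`, then `X = v wᵀ` satisfies `A X - X A = (λ - μ) X`, so `λ - μ` is
an eigenvalue of the integer `n² × n²` matrix `B = 1 ⊗ A - Aᵀ ⊗ 1` representing `X ↦ A X - X A`.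
Removing the factor `X^k` from the characteristic polynomial of `B` leaves a monic integer
polynomial with nonzero constant term, whose roots therefore have product of modulus `≥ 1`.
All eigenvalues of `B` have modulus at most `R = n² 2^(a+1)` by Gershgorin, so every nonzero
eigenvalue of `B` has modulus at least `R^(1 - n²) ≥ 2^(-4 a n² log₂(n a + 2))`.
-/

open Polynomial Matrix
open scoped Kronecker

namespace Polynomial

theorem one_le_norm_mul_pow_of_mem_roots_of_coeff_zero_ne_zero {q : ℤ[X]} (hq : q.Monic)
    (h0 : q.coeff 0 ≠ 0) {R : ℝ} (hroots : ∀ z ∈ (q.map (Int.castRingHom ℂ)).roots, ‖z‖ ≤ R)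
    {x : ℂ} (hx : x ∈ (q.map (Int.castRingHom ℂ)).roots) :
    1 ≤ ‖x‖ * R ^ (q.natDegree - 1) := by
  set p := q.map (Int.castRingHom ℂ)
  have hsplit : p.Splits := IsAlgClosed.splits p
  obtain ⟨s, hs⟩ := Multiset.exists_cons_of_mem hx
  have hcard : Multiset.card s = q.natDegree - 1 := by
    rw [← hq.natDegree_map (Int.castRingHom ℂ), hsplit.natDegree_eq_card_roots, hs,
      Multiset.card_cons, Nat.add_sub_cancel]
  have hprod : 1 ≤ ‖p.roots.prod‖ := by
    have hcoeff : ‖p.coeff 0‖ = ‖p.roots.prod‖ := by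
      rw [hsplit.coeff_zero_eq_prod_roots_of_monic (hq.map _)]
      simp
    rw [← hcoeff, coeff_map, eq_intCast, Complex.norm_intCast]
    exact_mod_cast Int.one_le_abs h0
  have hs_le : ‖s.prod‖ ≤ R ^ (q.natDegree - 1) := by
    rw [← hcard, ← normHom_apply, map_multiset_prod]
    exact Multiset.prod_map_le_pow_card (fun z _ => norm_nonneg z)
      fun z hz => hroots z (hs ▸ Multiset.mem_cons_of_mem hz)
  calc 1 ≤ ‖p.roots.prod‖ := hprod
    _ = ‖x‖ * ‖s.prod‖ := by rw [hs, Multiset.prod_cons, norm_mul]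
    _ ≤ ‖x‖ * R ^ (q.natDegree - 1) := by gcongr

theorem one_le_norm_mul_pow_of_isRoot {p : ℤ[X]} (hp : p.Monic) {R : ℝ} (hR : 1 ≤ R)
    (hroots : ∀ z, (p.map (Int.castRingHom ℂ)).IsRoot z → ‖z‖ ≤ R)
    {x : ℂ} (hx : (p.map (Int.castRingHom ℂ)).IsRoot x) (hx0 : x ≠ 0) :
    1 ≤ ‖x‖ * R ^ (p.natDegree - 1) := by
  obtain ⟨q, hpq, hXq⟩ := p.exists_eq_pow_rootMultiplicity_mul_and_not_dvd hp.ne_zero 0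
  rw [map_zero, sub_zero] at hpq hXq
  generalize p.rootMultiplicity 0 = k at hpq
  have hq : q.Monic := (monic_X.pow _).of_mul_monic_left (hpq ▸ hp)
  have hmap : p.map (Int.castRingHom ℂ) = X ^ k * q.map (Int.castRingHom ℂ) := by
    rw [hpq]; simp
  have hroot_q : ∀ z, z ≠ 0 → (p.map (Int.castRingHom ℂ)).IsRoot z →
      z ∈ (q.map (Int.castRingHom ℂ)).roots := by
    intro z hz h
    rw [hmap, IsRoot, eval_mul, eval_pow, eval_X] at h
    exact (mem_roots (hq.map _).ne_zero).2 ((mul_eq_zero.1 h).resolve_left (pow_ne_zero _ hz))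
  have hdeg : q.natDegree ≤ p.natDegree := by
    rw [hpq, natDegree_mul (monic_X.pow _).ne_zero hq.ne_zero]; lia
  calc 1 ≤ ‖x‖ * R ^ (q.natDegree - 1) :=
        one_le_norm_mul_pow_of_mem_roots_of_coeff_zero_ne_zero hq (by rwa [X_dvd_iff] at hXq)
          (fun z hz => hroots z
            (hmap ▸ root_mul_left_of_isRoot _ ((mem_roots (hq.map _).ne_zero).1 hz)))
          (hroot_q x hx0 hx)
    _ ≤ ‖x‖ * R ^ (p.natDegree - 1) := by gcongr

end Polynomial

namespace Matrix

variable {n : Type*} [DecidableEq n]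

theorem norm_one_kronecker_sub_transpose_kronecker_one_apply_le {K : Type*} [NormedField K]
    {A : Matrix n n K} {r : ℝ} (hA : ∀ i j, ‖A i j‖ ≤ r) (p q : n × n) :
    ‖(1 ⊗ₖ A - Aᵀ ⊗ₖ 1 : Matrix (n × n) (n × n) K) p q‖ ≤ 2 * r := by
  have hone : ∀ i j, ‖(1 : Matrix n n K) i j‖ ≤ 1 := fun i j => by
    rw [one_apply]; split_ifs <;> simp
  have hr : 0 ≤ r := (norm_nonneg _).trans (hA p.1 p.1)
  calc ‖(1 ⊗ₖ A - Aᵀ ⊗ₖ 1 : Matrix (n × n) (n × n) K) p q‖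
      ≤ ‖(1 : Matrix n n K) p.1 q.1‖ * ‖A p.2 q.2‖
          + ‖A q.1 p.1‖ * ‖(1 : Matrix n n K) p.2 q.2‖ := by
        simpa [norm_mul] using norm_sub_le ((1 : Matrix n n K) p.1 q.1 * A p.2 q.2)
          (A q.1 p.1 * (1 : Matrix n n K) p.2 q.2)
    _ ≤ 1 * r + r * 1 := by gcongr <;> apply_rules [hone, hA]
    _ = 2 * r := by ring

variable [Fintype n]

theorem mem_spectrum_iff_exists_mulVec_eq_smul {K : Type*} [Field K] {M : Matrix n n K} {x : K} :
    x ∈ spectrum K M ↔ ∃ v ≠ 0, M *ᵥ v = x • v := by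
  rw [← spectrum_toLin', ← Module.End.hasEigenvalue_iff_mem_spectrum]
  constructor
  · intro h
    obtain ⟨v, hv⟩ := h.exists_hasEigenvector
    exact ⟨v, hv.2, by simpa using hv.apply_eq_smul⟩
  · rintro ⟨v, hv0, hv⟩
    exact Module.End.hasEigenvalue_of_hasEigenvector
      ⟨by simpa [Module.End.mem_eigenspace_iff] using hv, hv0⟩

theorem mem_spectrum_transpose_iff {K : Type*} [Field K] {M : Matrix n n K} {x : K} :
    x ∈ spectrum K Mᵀ ↔ x ∈ spectrum K M := by
  rw [mem_spectrum_iff_isRoot_charpoly, mem_spectrum_iff_isRoot_charpoly, charpoly_transpose]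

theorem sub_mem_spectrum_one_kronecker_sub_transpose_kronecker_one {K : Type*} [Field K]
    {A : Matrix n n K} {lam mu : K} (hlam : lam ∈ spectrum K A) (hmu : mu ∈ spectrum K A) :
    lam - mu ∈ spectrum K (1 ⊗ₖ A - Aᵀ ⊗ₖ 1) := by
  obtain ⟨v, hv0, hv⟩ := mem_spectrum_iff_exists_mulVec_eq_smul.1 hlam
  obtain ⟨w, hw0, hw⟩ :=
    mem_spectrum_iff_exists_mulVec_eq_smul.1 (mem_spectrum_transpose_iff.2 hmu)
  rw [mulVec_transpose] at hw
  refine mem_spectrum_iff_exists_mulVec_eq_smul.2 ⟨vec (vecMulVec v w), ?_, ?_⟩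
  · rw [Ne, ← vec_zero, vec_inj]
    exact vecMulVec_ne_zero hv0 hw0
  · rw [sub_mulVec, kronecker_mulVec_vec, kronecker_mulVec_vec, transpose_one,
      transpose_transpose, Matrix.mul_one, Matrix.one_mul, mul_vecMulVec, vecMulVec_mul, hv, hw]
    ext ⟨i, j⟩
    simp only [vec, Pi.sub_apply, Pi.smul_apply, vecMulVec_apply, smul_eq_mul]
    ring

theorem norm_le_card_mul_of_mem_spectrum {K : Type*} [NormedField K] {M : Matrix n n K} {r : ℝ}
    (hM : ∀ i j, ‖M i j‖ ≤ r) {x : K} (hx : x ∈ spectrum K M) :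
    ‖x‖ ≤ Fintype.card n * r := by
  obtain ⟨k, hk⟩ := eigenvalue_mem_ball (A := M)
    (by rwa [Module.End.hasEigenvalue_iff_mem_spectrum, spectrum_toLin'])
  rw [mem_closedBall_iff_norm] at hk
  calc ‖x‖ ≤ ‖M k k‖ + ‖x - M k k‖ := norm_le_insert' _ _
    _ ≤ ‖M k k‖ + ∑ j ∈ Finset.univ.erase k, ‖M k j‖ := by gcongr
    _ = ∑ j, ‖M k j‖ := Finset.add_sum_erase _ (fun j => ‖M k j‖) (Finset.mem_univ k)
    _ ≤ ∑ _j : n, r := Finset.sum_le_sum fun j _ => hM k j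
    _ = Fintype.card n * r := by simp

theorem one_le_norm_mul_pow_of_mem_spectrum_map_intCast (B : Matrix n n ℤ) {R : ℝ} (hR : 1 ≤ R)
    (hspec : ∀ z ∈ spectrum ℂ (B.map (Int.cast : ℤ → ℂ)), ‖z‖ ≤ R) {x : ℂ}
    (hx : x ∈ spectrum ℂ (B.map (Int.cast : ℤ → ℂ))) (hx0 : x ≠ 0) :
    1 ≤ ‖x‖ * R ^ (Fintype.card n - 1) := by
  have hroot : ∀ z, z ∈ spectrum ℂ (B.map (Int.cast : ℤ → ℂ)) ↔
      (B.charpoly.map (Int.castRingHom ℂ)).IsRoot z := fun z => by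
    rw [mem_spectrum_iff_isRoot_charpoly, ← charpoly_map]; rfl
  rw [← B.charpoly_natDegree_eq_dim]
  exact one_le_norm_mul_pow_of_isRoot B.charpoly_monic hR (fun z hz => hspec z ((hroot z).2 hz))
    ((hroot x).1 hx) hx0

end Matrix

theorem sq_mul_two_pow_succ_le (n a : ℕ) (ha : 1 ≤ a) :
    n ^ 2 * 2 ^ (a + 1) ≤ (n * a + 2) ^ (4 * a) :=
  calc n ^ 2 * 2 ^ (a + 1) ≤ (n * a + 2) ^ 2 * (n * a + 2) ^ (a + 1) := by
        gcongr <;> nlinarith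
    _ = (n * a + 2) ^ (a + 3) := by ring
    _ ≤ (n * a + 2) ^ (4 * a) := Nat.pow_le_pow_right (by lia) (by lia)

theorem two_rpow_neg_le_of_one_le_mul_pow {n a : ℕ} (hn : 1 ≤ n) (ha : 1 ≤ a) {x : ℝ}
    (hx : 1 ≤ x * (n ^ 2 * 2 ^ (a + 1)) ^ (n ^ 2 - 1)) :
    (2 : ℝ) ^ (-(4 * a * n ^ 2 * Real.logb 2 (n * a + 2))) ≤ x := by
  set R : ℝ := n ^ 2 * 2 ^ (a + 1)
  set M : ℝ := n * a + 2
  have hM : 0 < M := by positivity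
  have hRM : R ≤ M ^ (4 * a) := by
    simp only [R, M]; exact_mod_cast sq_mul_two_pow_succ_le n a ha
  calc (2 : ℝ) ^ (-(4 * a * n ^ 2 * Real.logb 2 M))
      = ((M ^ (4 * a)) ^ n ^ 2)⁻¹ := by
        rw [show -(4 * a * n ^ 2 * Real.logb 2 M) = Real.logb 2 M * -((4 * a * n ^ 2 : ℕ) : ℝ)
          by push_cast; ring, Real.rpow_mul zero_le_two, Real.rpow_logb two_pos (by norm_num) hM,
          Real.rpow_neg hM.le, Real.rpow_natCast, pow_mul]
    _ ≤ (R ^ (n ^ 2 - 1))⁻¹ := by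
        gcongr
        calc R ^ (n ^ 2 - 1) ≤ (M ^ (4 * a)) ^ (n ^ 2 - 1) := by gcongr
          _ ≤ (M ^ (4 * a)) ^ n ^ 2 :=
            pow_le_pow_right₀ (one_le_pow₀ (le_add_of_nonneg_of_le (by positivity) one_le_two))
              (Nat.sub_le _ _)
    _ ≤ x := (inv_le_iff_one_le_mul₀ (by positivity)).2 hx

/-- For an integer matrix `A` with entries of absolute value at most `2^a` (bit length `a`)
and at least two distinct complex eigenvalues, the minimum gap between distinct eigenvalues
satisfies `mindgap(A) ≥ 2^{-C a n² (log₂(na+2))^k}` for universal constants `C > 0`, `k ≥ 1`. -/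
theorem mindgap_lower_bound_integer_matrices :
    ∃ (C : ℝ) (k : ℕ), 0 < C ∧ 1 ≤ k ∧
      ∀ (n a : ℕ), 2 ≤ n → 1 ≤ a →
        ∀ A : Matrix (Fin n) (Fin n) ℤ,
          (∀ i j, |A i j| ≤ 2 ^ a) →
          (∃ lam mu : ℂ, lam ∈ spectrum ℂ (A.map (Int.cast : ℤ → ℂ)) ∧
            mu ∈ spectrum ℂ (A.map (Int.cast : ℤ → ℂ)) ∧ lam ≠ mu) →
          ∀ lam mu : ℂ, lam ∈ spectrum ℂ (A.map (Int.cast : ℤ → ℂ)) →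
            mu ∈ spectrum ℂ (A.map (Int.cast : ℤ → ℂ)) → lam ≠ mu →
            (2 : ℝ) ^ (-(C * a * n ^ 2 * (Real.logb 2 (n * a + 2)) ^ k)) ≤ ‖lam - mu‖ := by
  refine ⟨4, 1, by norm_num, le_rfl, fun n a hn ha A hA _ lam mu hlam hmu hne => ?_⟩
  set A' := A.map (Int.cast : ℤ → ℂ)
  have hmap : (1 ⊗ₖ A - Aᵀ ⊗ₖ 1).map (Int.cast : ℤ → ℂ) = 1 ⊗ₖ A' - A'ᵀ ⊗ₖ 1 := by
    ext ⟨i, k⟩ ⟨j, l⟩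
    simp [A', one_apply]
  have hA' : ∀ i j, ‖A' i j‖ ≤ 2 ^ a := fun i j => by
    simpa [A', Complex.norm_intCast] using (Int.cast_le (R := ℝ)).2 (hA i j)
  have hspec : ∀ z ∈ spectrum ℂ ((1 ⊗ₖ A - Aᵀ ⊗ₖ 1).map (Int.cast : ℤ → ℂ)),
      ‖z‖ ≤ n ^ 2 * 2 ^ (a + 1) := fun z hz => by
    have := norm_le_card_mul_of_mem_spectrum
      (norm_one_kronecker_sub_transpose_kronecker_one_apply_le hA') (hmap ▸ hz)
    simpa [sq, pow_succ, mul_comm, mul_assoc, mul_left_comm] using this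
  have hR : (1 : ℝ) ≤ n ^ 2 * 2 ^ (a + 1) :=
    one_le_mul_of_one_le_of_one_le (by norm_cast; nlinarith) (one_le_pow₀ one_le_two)
  have hgap := one_le_norm_mul_pow_of_mem_spectrum_map_intCast _ hR hspec
    (hmap ▸ sub_mem_spectrum_one_kronecker_sub_transpose_kronecker_one hlam hmu)
    (sub_ne_zero.2 hne)
  rw [Fintype.card_prod, Fintype.card_fin, ← sq] at hgap
  simpa using two_rpow_neg_le_of_one_le_mul_pow (by lia) ha hgap
end

section
/- (Bauer–Fike theorem.) Let A ∈ ℂ^{n×n} be diagonalizable, with A = V D V^{-1} for an invertible V and diagonal D. Then for every E ∈ ℂ^{n×n}, every eigenvalue μ of A + E satisfies min_{λ ∈ spec(A)} |μ − λ| ≤ ‖V‖·‖V^{-1}‖·‖E‖. In particular, every eigenvalue of A + E lies within distance κ_V(A)·‖E‖ of the spectrum of A. -/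
open scoped Matrix.Norms.L2Operator

/-! Conjugating by `V` turns `A + E` into `D + V⁻¹EV` without changing spectra. If `μ` were farther
than `‖V⁻¹EV‖` from every diagonal entry of `D`, the resolvent `(μ - D)⁻¹` would be diagonal of norm
`< 1 / ‖V⁻¹EV‖`, and `μ - (D + V⁻¹EV) = (μ - D)(1 - (μ - D)⁻¹V⁻¹EV)` would be invertible by the
Neumann series. -/

theorem spectrum.one_le_norm_resolvent_mul_norm {𝕜 A : Type*} [CommSemiring 𝕜] [NormedRing A]
    [HasSummableGeomSeries A] [Algebra 𝕜 A] {a e : A} {μ : 𝕜}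
    (ha : μ ∈ resolventSet 𝕜 a) (hae : μ ∈ spectrum 𝕜 (a + e)) :
    1 ≤ ‖resolvent a μ‖ * ‖e‖ := by
  obtain ⟨x, hx⟩ := spectrum.mem_resolventSet_iff.mp ha
  rw [resolvent, ← hx, Ring.inverse_unit]
  by_contra! h
  have hfactor : algebraMap 𝕜 A μ - (a + e) = x * (1 - ↑x⁻¹ * e) := by
    rw [mul_sub, mul_one, ← mul_assoc, Units.mul_inv, one_mul, hx]
    abel
  have hsmall : ‖(↑x⁻¹ : A) * e‖ < 1 := (norm_mul_le _ _).trans_lt h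
  exact spectrum.mem_iff.mp hae (hfactor ▸ x.isUnit.mul (Units.oneSub _ hsmall).isUnit)

namespace Matrix

theorem resolvent_diagonal {n 𝕜 : Type*} [Fintype n] [DecidableEq n] [Field 𝕜]
    {d : n → 𝕜} {μ : 𝕜} (hμ : ∀ i, μ ≠ d i) :
    resolvent (diagonal d) μ = diagonal fun i => (μ - d i)⁻¹ := by
  have hsub : algebraMap 𝕜 _ μ - diagonal d = diagonal fun i => μ - d i := by
    rw [algebraMap_eq_diagonal, diagonal_sub]; rfl
  rw [resolvent, hsub, ← nonsing_inv_eq_ringInverse]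
  refine inv_eq_left_inv ?_
  rw [diagonal_mul_diagonal, ← diagonal_one]
  exact congrArg _ (funext fun i => inv_mul_cancel₀ (sub_ne_zero.mpr (hμ i)))

theorem exists_norm_sub_le_of_mem_spectrum_diagonal_add {n 𝕜 : Type*} [Fintype n]
    [DecidableEq n] [RCLike 𝕜] {d : n → 𝕜} {F : Matrix n n 𝕜} {μ : 𝕜}
    (hμ : μ ∈ spectrum 𝕜 (diagonal d + F)) : ∃ i, ‖μ - d i‖ ≤ ‖F‖ := by
  by_contra! hfar
  have hne : ∀ i, μ ≠ d i := fun i h => by simpa [h] using (norm_nonneg F).trans_lt (hfar i)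
  have hres : μ ∈ resolventSet 𝕜 (diagonal d) := spectrum.notMem_iff.mp <| by
    rw [spectrum_diagonal]; rintro ⟨i, rfl⟩; exact hne i rfl
  have key := spectrum.one_le_norm_resolvent_mul_norm hres hμ
  rw [resolvent_diagonal hne, l2_opNorm_diagonal] at key
  rcases (norm_nonneg F).eq_or_lt with hF | hF
  · norm_num [← hF] at key
  have hsmall : ‖fun i => (μ - d i)⁻¹‖ < 1 / ‖F‖ :=
    (pi_norm_lt_iff (by positivity)).mpr fun i => by
      rw [norm_inv, one_div]; exact inv_strictAnti₀ hF (hfar i)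
  exact ((lt_div_iff₀ hF).mp hsmall).not_ge key

end Matrix

/-- Bauer–Fike theorem: if `A = V D V⁻¹` with `V` invertible and `D` diagonal, then every
eigenvalue `μ` of `A + E` lies within distance `‖V‖‖V⁻¹‖‖E‖` of the spectrum of `A`
(norms are spectral norms). -/
theorem bauer_fike {n : ℕ} (A V D : Matrix (Fin n) (Fin n) ℂ)
    (hV : IsUnit V) (hD : D.IsDiag) (hA : A = V * D * V⁻¹)
    (E : Matrix (Fin n) (Fin n) ℂ) (μ : ℂ) (hμ : μ ∈ spectrum ℂ (A + E)) :
    ∃ lam ∈ spectrum ℂ A, ‖μ - lam‖ ≤ ‖V‖ * ‖V⁻¹‖ * ‖E‖ := by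
  have hsim (X : Matrix (Fin n) (Fin n) ℂ) : spectrum ℂ (V⁻¹ * X * V) = spectrum ℂ X := by
    obtain ⟨u, rfl⟩ := hV
    rw [← Matrix.coe_units_inv, spectrum.units_conjugate']
  have hdiag : V⁻¹ * A * V = Matrix.diagonal D.diag := by
    have hdet := (Matrix.isUnit_iff_isUnit_det V).mp hV
    rw [hA, hD.diagonal_diag, ← mul_assoc, ← mul_assoc, Matrix.nonsing_inv_mul _ hdet, one_mul,
      mul_assoc, Matrix.nonsing_inv_mul _ hdet, mul_one]
  rw [← hsim, mul_add, add_mul, hdiag] at hμ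
  obtain ⟨i, hi⟩ := Matrix.exists_norm_sub_le_of_mem_spectrum_diagonal_add hμ
  refine ⟨D.diag i, by simp [← hsim A, hdiag], hi.trans ?_⟩
  calc ‖V⁻¹ * E * V‖ ≤ ‖V⁻¹‖ * ‖E‖ * ‖V‖ := norm_mul₃_le
    _ = ‖V‖ * ‖V⁻¹‖ * ‖E‖ := by ring
end

section
/- Let z₀ ∈ ℂ with Re z₀ > 0, and define the sequence z_{k+1} = (z_k + z_k^{-1})/2. Then for every k: (i) Re z_k > 0 (in particular z_k ≠ 0, so the sequence is well defined); (ii) (z_k − 1)/(z_k + 1) = ((z₀ − 1)/(z₀ + 1))^{2^k}; and (iii) z_k → 1 as k → ∞. Symmetrically, if Re z₀ < 0 then z_k → −1. -/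
/-!
The Cayley transform `c(w) = (w - 1)/(w + 1)` conjugates the step `w ↦ (w + w⁻¹)/2` to
squaring, `c((w + w⁻¹)/2) = c(w)²`, so `c(z_k) = c(z₀)^(2^k)`. It maps the right half-plane
into the open unit disc, hence `c(z_k) → 0`, and inverting the transform gives `z_k → 1`.
The step is odd, so the left half-plane case follows by applying this to `-z_k`.
-/

open Filter Topology

def cayley {K : Type*} [Field K] (w : K) : K := (w - 1) / (w + 1)

section Field

variable {K : Type*} [Field K] [NeZero (2 : K)]

theorem cayley_add_inv_div_two {w : K} (hw : w ≠ 0) :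
    cayley ((w + w⁻¹) / 2) = cayley w ^ 2 := by
  have hnum : (w + w⁻¹) / 2 - 1 = (w - 1) ^ 2 / (2 * w) := by field_simp; ring
  have hden : (w + w⁻¹) / 2 + 1 = (w + 1) ^ 2 / (2 * w) := by field_simp; ring
  rw [cayley, cayley, hnum, hden, div_pow,
    div_div_div_cancel_right₀ (mul_ne_zero two_ne_zero hw)]

theorem one_add_cayley_div_one_sub_cayley {w : K} (hw₁ : w + 1 ≠ 0) :
    (1 + cayley w) / (1 - cayley w) = w := by
  have hnum : 1 + cayley w = 2 * w / (w + 1) := by rw [cayley]; field_simp; ring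
  have hden : 1 - cayley w = 2 / (w + 1) := by rw [cayley]; field_simp; ring
  rw [hnum, hden, div_div_div_cancel_right₀ hw₁, mul_div_cancel_left₀ _ two_ne_zero]

theorem cayley_iterate_add_inv_div_two {z : ℕ → K}
    (hrec : ∀ k, z (k + 1) = (z k + (z k)⁻¹) / 2) (hz : ∀ k, z k ≠ 0) (k : ℕ) :
    cayley (z k) = cayley (z 0) ^ 2 ^ k := by
  induction k with
  | zero => rw [pow_zero, pow_one]
  | succ k ih => rw [hrec, cayley_add_inv_div_two (hz k), ih, ← pow_mul, ← pow_succ]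

end Field

theorem tendsto_one_of_tendsto_cayley_zero {K : Type*} [NormedField K] [NeZero (2 : K)]
    {z : ℕ → K} (hz₁ : ∀ k, z k + 1 ≠ 0)
    (hc : Tendsto (fun k ↦ cayley (z k)) atTop (𝓝 0)) :
    Tendsto z atTop (𝓝 1) := by
  have h := (tendsto_const_nhds (x := (1 : K))).add hc |>.div
    ((tendsto_const_nhds (x := (1 : K))).sub hc) (by simp)
  simp only [add_zero, sub_zero, div_one] at h
  exact h.congr fun k ↦ one_add_cayley_div_one_sub_cayley (hz₁ k)

namespace Complex

theorem re_add_inv_div_two_pos {w : ℂ} (hw : 0 < w.re) : 0 < ((w + w⁻¹) / 2).re := by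
  have hnormSq : 0 < normSq w := normSq_pos.mpr (ne_zero_of_re_pos hw)
  rw [div_ofNat_re, add_re, inv_re]
  positivity

theorem norm_cayley_lt_one {w : ℂ} (hw : 0 < w.re) : ‖cayley w‖ < 1 := by
  have hw₁ : w + 1 ≠ 0 := ne_zero_of_re_pos (by rw [add_re, one_re]; linarith)
  rw [cayley, norm_div, div_lt_one (norm_pos_iff.mpr hw₁)]
  refine lt_of_pow_lt_pow_left₀ 2 (norm_nonneg _) ?_
  rw [Complex.sq_norm, Complex.sq_norm, normSq_apply, normSq_apply]
  simp only [sub_re, sub_im, add_re, add_im, one_re, one_im]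
  -- `‖w + 1‖² - ‖w - 1‖² = 4 Re w`
  nlinarith

theorem newton_sign_of_re_pos {z : ℕ → ℂ} (hrec : ∀ k, z (k + 1) = (z k + (z k)⁻¹) / 2)
    (h₀ : 0 < (z 0).re) :
    (∀ k, 0 < (z k).re) ∧ (∀ k, cayley (z k) = cayley (z 0) ^ 2 ^ k) ∧
      Tendsto z atTop (𝓝 1) := by
  have hre : ∀ k, 0 < (z k).re := fun k ↦ by
    induction k with
    | zero => exact h₀
    | succ k ih => exact hrec k ▸ re_add_inv_div_two_pos ih
  have hz₁ : ∀ k, z k + 1 ≠ 0 := fun k ↦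
    ne_zero_of_re_pos (by rw [add_re, one_re]; linarith [hre k])
  have hc := cayley_iterate_add_inv_div_two hrec fun k ↦ ne_zero_of_re_pos (hre k)
  have hc₀ : Tendsto (fun k ↦ cayley (z 0) ^ 2 ^ k) atTop (𝓝 0) :=
    (tendsto_pow_atTop_nhds_zero_of_norm_lt_one (norm_cayley_lt_one h₀)).comp
      (tendsto_pow_atTop_atTop_of_one_lt one_lt_two)
  exact ⟨hre, hc, tendsto_one_of_tendsto_cayley_zero hz₁ (hc₀.congr fun k ↦ (hc k).symm)⟩

end Complex

/-- Scalar Newton iteration for the sign function: for `z_{k+1} = (z_k + z_k⁻¹)/2`,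
if `Re z₀ > 0` then (i) `Re z_k > 0` for all `k`, (ii)
`(z_k - 1)/(z_k + 1) = ((z₀ - 1)/(z₀ + 1))^{2^k}`, and (iii) `z_k → 1`;
symmetrically, if `Re z₀ < 0` then `z_k → -1`. -/
theorem sign_function_scalar_iteration (z : ℕ → ℂ)
    (hrec : ∀ k, z (k + 1) = (z k + (z k)⁻¹) / 2) :
    (0 < (z 0).re →
      (∀ k, 0 < (z k).re) ∧
      (∀ k, (z k - 1) / (z k + 1) = ((z 0 - 1) / (z 0 + 1)) ^ (2 ^ k)) ∧
      Tendsto z atTop (𝓝 1)) ∧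
    ((z 0).re < 0 → Tendsto z atTop (𝓝 (-1))) := by
  refine ⟨Complex.newton_sign_of_re_pos hrec, fun h₀ ↦ ?_⟩
  have hrec_neg : ∀ k, -z (k + 1) = (-z k + (-z k)⁻¹) / 2 := fun k ↦ by
    rw [hrec, inv_neg]; ring
  have h := (Complex.newton_sign_of_re_pos (z := fun k ↦ -z k) hrec_neg
    (by simpa using h₀)).2.2.neg
  simpa using h
end

section
/- Let n ≥ 2 and let S_n be the n×n matrix with (S_n)_{i+1,i} = 1/4, (S_n)_{i,i+1} = 1 for 1 ≤ i ≤ n−1, and all other entries zero. Then S_n is diagonalizable and its eigenvector condition number satisfies κ_V(S_n) ≥ 2^n / (n+1)³; in particular κ_V(S_n) grows exponentially in n. -/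
/-
With θ_k = kπ/(n+1), the vectors x_k = (2^(-j) sin(jθ_k))_j and y_k = (2^j sin(jθ_k))_j are right
and left eigenvectors of S_n for the n distinct eigenvalues cos θ_k, so S_n is diagonalizable.
Since these eigenvalues are simple, whenever V⁻¹ S_n V is diagonal some column of V and the
matching row of V⁻¹ are multiples a x_k and b y_k, and (V⁻¹ V)_ll = 1 forces a b (x_k ⬝ y_k) = 1.
Bounding ‖V‖ and ‖V⁻¹‖ below by one entry each gives κ_V(S_n) ≥ |x_k(1) y_k(n)| / |x_k ⬝ y_k|,
which for k = 1 is 2^(n-1) sin²(π/(n+1)) / ∑_j sin²(jπ/(n+1)) ≥ 2^(n+1) / (n (n+1)²), using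
sin x ≥ 2x/π on [0, π/2].
-/

open scoped Matrix.Norms.L2Operator

/-- The eigenvector condition number of a diagonalizable matrix `A`:
`κ_V(A) = inf { ‖V‖‖V⁻¹‖ : V invertible, V⁻¹ A V diagonal }`, with the spectral norm. -/
noncomputable def kappaV {n : ℕ} (A : Matrix (Fin n) (Fin n) ℂ) : ℝ :=
  sInf {x : ℝ | ∃ V : Matrix (Fin n) (Fin n) ℂ,
    IsUnit V ∧ (V⁻¹ * A * V).IsDiag ∧ x = ‖V‖ * ‖V⁻¹‖}

open Matrix Real

namespace Matrix

section SimpleSpectrum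

variable {K ι : Type*} [Field K] [Fintype ι] {M : Matrix ι ι K} {μ : ι → K}
  {p : ι → ι → K}

theorem linearIndependent_of_mulVec_eq_smul (hμ : Function.Injective μ)
    (hp : ∀ k, M *ᵥ p k = μ k • p k) (hp0 : ∀ k, p k ≠ 0) : LinearIndependent K p :=
  Module.End.eigenvectors_linearIndependent' M.mulVecLin μ hμ p fun k =>
    Module.End.hasEigenvector_iff.mpr ⟨Module.End.mem_eigenspace_iff.mpr (hp k), hp0 k⟩

theorem exists_isUnit_isDiag_inv_mul_mul [DecidableEq ι] (hli : LinearIndependent K p)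
    (hp : ∀ k, M *ᵥ p k = μ k • p k) : ∃ V : Matrix ι ι K, IsUnit V ∧ (V⁻¹ * M * V).IsDiag := by
  have hW : IsUnit (of p)ᵀ := linearIndependent_cols_iff_isUnit.mp hli
  have hMW : M * (of p)ᵀ = (of p)ᵀ * diagonal μ := by
    ext i k
    rw [mul_diagonal]
    exact (congrFun (hp k) i).trans (mul_comm _ _)
  refine ⟨(of p)ᵀ, hW, ?_⟩
  rw [Matrix.mul_assoc, hMW, ← Matrix.mul_assoc,
    nonsing_inv_mul _ ((isUnit_iff_isUnit_det _).mp hW), Matrix.one_mul]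
  exact isDiag_diagonal μ

theorem exists_eq_smul_of_mulVec_eq_smul (hμ : Function.Injective μ)
    (hp : ∀ k, M *ᵥ p k = μ k • p k) (hli : LinearIndependent K p) {k : ι} {v : ι → K}
    (hv : M *ᵥ v = μ k • v) : ∃ c : K, v = c • p k := by
  have hspan : Submodule.span K (Set.range p) = ⊤ :=
    hli.span_eq_top_of_card_eq_finrank' (Module.finrank_fintype_fun_eq_card K).symm
  have hv_mem : v ∈ Submodule.span K (Set.range p) := hspan ▸ Submodule.mem_top
  obtain ⟨c, rfl⟩ := (Submodule.mem_span_range_iff_exists_fun K).mp hv_mem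
  have hcomb : ∑ l, (c l * (μ l - μ k)) • p l = 0 := by
    rw [mulVec_sum, Finset.smul_sum] at hv
    simp only [mulVec_smul, hp] at hv
    simp only [mul_sub, sub_smul, Finset.sum_sub_distrib, mul_smul, hv]
    exact sub_eq_zero.mpr (Finset.sum_congr rfl fun l _ => smul_comm _ _ _)
  have hc : ∀ l, l ≠ k → c l = 0 := fun l hl =>
    (mul_eq_zero.mp (Fintype.linearIndependent_iff.mp hli _ hcomb l)).resolve_right
      (sub_ne_zero.mpr (hμ.ne hl))
  exact ⟨c k, Finset.sum_eq_single k (fun l _ hl => by rw [hc l hl, zero_smul])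
    (fun h => absurd (Finset.mem_univ k) h)⟩

theorem mul_eq_mul_diagonal_of_isDiag [DecidableEq ι] {V : Matrix ι ι K} (hV : IsUnit V)
    (hD : (V⁻¹ * M * V).IsDiag) : M * V = V * diagonal (V⁻¹ * M * V).diag := by
  rw [hD.diagonal_diag, ← Matrix.mul_assoc, ← Matrix.mul_assoc,
    mul_nonsing_inv _ ((isUnit_iff_isUnit_det V).mp hV), Matrix.one_mul]

theorem transpose_mul_inv_transpose_of_mul_eq_mul_diagonal [DecidableEq ι] {V : Matrix ι ι K}
    {d : ι → K} (hV : IsUnit V) (h : M * V = V * diagonal d) :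
    Mᵀ * V⁻¹ᵀ = V⁻¹ᵀ * diagonal d := by
  have hdet := (isUnit_iff_isUnit_det V).mp hV
  have hinv : V⁻¹ * M = diagonal d * V⁻¹ :=
    calc V⁻¹ * M = V⁻¹ * (M * V) * V⁻¹ := by
          rw [Matrix.mul_assoc, Matrix.mul_assoc, mul_nonsing_inv V hdet, Matrix.mul_one]
      _ = diagonal d * V⁻¹ := by
          rw [h, ← Matrix.mul_assoc, nonsing_inv_mul V hdet, Matrix.one_mul]
  rw [← transpose_mul, hinv, transpose_mul, diagonal_transpose]

theorem mulVec_col_of_mul_eq_mul_diagonal [DecidableEq ι] {V : Matrix ι ι K} {d : ι → K}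
    (h : M * V = V * diagonal d) (i : ι) : M *ᵥ V.col i = d i • V.col i := by
  ext j
  have hji := congrFun (congrFun h j) i
  rw [mul_diagonal] at hji
  exact hji.trans (mul_comm _ _)

theorem exists_eq_of_mul_eq_mul_diagonal [DecidableEq ι] {V : Matrix ι ι K} {d : ι → K}
    (hV : IsUnit V) (h : M * V = V * diagonal d) {c : K} {x : ι → K} (hx : M *ᵥ x = c • x)
    (hx0 : x ≠ 0) : ∃ i, d i = c := by
  have hdet := (isUnit_iff_isUnit_det V).mp hV
  have hVu : V *ᵥ (V⁻¹ *ᵥ x) = x := by rw [mulVec_mulVec, mul_nonsing_inv V hdet, one_mulVec]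
  have hdu : diagonal d *ᵥ (V⁻¹ *ᵥ x) = c • (V⁻¹ *ᵥ x) := by
    apply mulVec_injective_iff_isUnit.mpr hV
    rw [mulVec_mulVec, ← h, ← mulVec_mulVec, hVu, hx, mulVec_smul, hVu]
  have hu0 : V⁻¹ *ᵥ x ≠ 0 := fun hu => hx0 (by rw [← hVu, hu, mulVec_zero])
  obtain ⟨i, hi⟩ := Function.ne_iff.mp hu0
  refine ⟨i, mul_right_cancel₀ hi ?_⟩
  simpa [mulVec_diagonal] using congrFun hdu i

end SimpleSpectrum

theorem norm_apply_le_l2_opNorm {𝕜 m n : Type*} [RCLike 𝕜] [Fintype m] [Fintype n]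
    [DecidableEq n] (A : Matrix m n 𝕜) (i : m) (j : n) : ‖A i j‖ ≤ ‖A‖ := by
  have hAij : A i j = (EuclideanSpace.equiv m 𝕜).symm (A *ᵥ EuclideanSpace.single j 1) i := by
    simp [EuclideanSpace.single, mulVec_single]
  calc ‖A i j‖ ≤ ‖(EuclideanSpace.equiv m 𝕜).symm (A *ᵥ EuclideanSpace.single j 1)‖ :=
        hAij ▸ PiLp.norm_apply_le _ i
    _ ≤ ‖A‖ := by simpa using A.l2_opNorm_mulVec (EuclideanSpace.single j 1)

theorem norm_mul_norm_le_of_isDiag {𝕜 ι : Type*} [RCLike 𝕜] [Fintype ι] [DecidableEq ι]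
    {M V : Matrix ι ι 𝕜} {μ : ι → 𝕜} {p q : ι → ι → 𝕜} (hμ : Function.Injective μ)
    (hp : ∀ k, M *ᵥ p k = μ k • p k) (hp0 : ∀ k, p k ≠ 0)
    (hq : ∀ k, Mᵀ *ᵥ q k = μ k • q k) (hq0 : ∀ k, q k ≠ 0)
    (hV : IsUnit V) (hD : (V⁻¹ * M * V).IsDiag) (k i j : ι) :
    ‖p k i‖ * ‖q k j‖ ≤ ‖V‖ * ‖V⁻¹‖ * ‖p k ⬝ᵥ q k‖ := by
  have hMV := mul_eq_mul_diagonal_of_isDiag hV hD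
  have hMVt := transpose_mul_inv_transpose_of_mul_eq_mul_diagonal hV hMV
  obtain ⟨l, hl⟩ := exists_eq_of_mul_eq_mul_diagonal hV hMV (hp k) (hp0 k)
  obtain ⟨a, ha⟩ := exists_eq_smul_of_mulVec_eq_smul hμ hp
    (linearIndependent_of_mulVec_eq_smul hμ hp hp0) (hl ▸ mulVec_col_of_mul_eq_mul_diagonal hMV l)
  obtain ⟨b, hb⟩ := exists_eq_smul_of_mulVec_eq_smul hμ hq
    (linearIndependent_of_mulVec_eq_smul hμ hq hq0) (hl ▸ mulVec_col_of_mul_eq_mul_diagonal hMVt l)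
  have hcol : ∀ m, V m l = a * p k m := fun m => congrFun ha m
  have hrow : ∀ m, V⁻¹ l m = b * q k m := fun m => congrFun hb m
  have hone : a * b * (p k ⬝ᵥ q k) = 1 := by
    have hll : (V⁻¹ * V) l l = 1 := by
      rw [nonsing_inv_mul V ((isUnit_iff_isUnit_det V).mp hV), one_apply_eq]
    rw [← hll, mul_apply, dotProduct, Finset.mul_sum]
    exact Finset.sum_congr rfl fun m _ => by rw [hcol, hrow]; ring
  have hab : ‖a‖ * ‖b‖ * ‖p k ⬝ᵥ q k‖ = 1 := by
    rw [← norm_mul, ← norm_mul, hone, norm_one]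
  calc ‖p k i‖ * ‖q k j‖ = ‖a * p k i‖ * ‖b * q k j‖ * ‖p k ⬝ᵥ q k‖ := by
        rw [norm_mul, norm_mul]; linear_combination -(‖p k i‖ * ‖q k j‖) * hab
    _ = ‖V i l‖ * ‖V⁻¹ l j‖ * ‖p k ⬝ᵥ q k‖ := by
        rw [hcol, hrow]
    _ ≤ ‖V‖ * ‖V⁻¹‖ * ‖p k ⬝ᵥ q k‖ := by
        gcongr
        exacts [norm_apply_le_l2_opNorm V i l, norm_apply_le_l2_opNorm V⁻¹ l j]

end Matrix

theorem norm_mul_norm_div_le_kappaV {n : ℕ} {M : Matrix (Fin n) (Fin n) ℂ} {μ : Fin n → ℂ}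
    {p q : Fin n → Fin n → ℂ} (hμ : Function.Injective μ)
    (hp : ∀ k, M *ᵥ p k = μ k • p k) (hp0 : ∀ k, p k ≠ 0)
    (hq : ∀ k, Mᵀ *ᵥ q k = μ k • q k) (hq0 : ∀ k, q k ≠ 0) (k i j : Fin n) :
    ‖p k i‖ * ‖q k j‖ / ‖p k ⬝ᵥ q k‖ ≤ kappaV M := by
  obtain ⟨W, hW, hWD⟩ :=
    exists_isUnit_isDiag_inv_mul_mul (linearIndependent_of_mulVec_eq_smul hμ hp hp0) hp
  refine le_csInf ⟨_, W, hW, hWD, rfl⟩ ?_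
  rintro _ ⟨V, hV, hD, rfl⟩
  exact div_le_of_le_mul₀ (norm_nonneg _) (by positivity)
    (norm_mul_norm_le_of_isDiag hμ hp hp0 hq hq0 hV hD k i j)

def tridiagToeplitz {R : Type*} [Zero R] (n : ℕ) (a b : R) : Matrix (Fin n) (Fin n) R :=
  of fun i j => if (j : ℕ) = i + 1 then a else if (i : ℕ) = j + 1 then b else 0

section Tridiag

variable {R : Type*} {n : ℕ}

theorem tridiagToeplitz_transpose [Zero R] (a b : R) :
    (tridiagToeplitz n a b)ᵀ = tridiagToeplitz n b a := by
  ext i j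
  simp only [tridiagToeplitz, transpose_apply, of_apply]
  split_ifs <;> first | rfl | omega

/-- Extending the vector by `f 0 = 0` and `f (n + 1) = 0` lets the first and last rows follow the
same three-term formula as the interior ones. -/
theorem tridiagToeplitz_mulVec_apply [NonUnitalNonAssocSemiring R] (a b : R) (f : ℕ → R)
    (h0 : f 0 = 0) (hn : f (n + 1) = 0) (j : Fin n) :
    (tridiagToeplitz n a b *ᵥ fun i => f (i + 1)) j = a * f (j + 2) + b * f j := by
  have hsplit : ∀ i : Fin n, tridiagToeplitz n a b j i * f (i + 1) =
      (if (i : ℕ) = j + 1 then a * f (i + 1) else 0) +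
        (if (i : ℕ) + 1 = j then b * f (i + 1) else 0) := by
    intro i
    simp only [tridiagToeplitz, of_apply]
    split_ifs <;> first | omega | simp
  simp only [mulVec, dotProduct, hsplit, Finset.sum_add_distrib]
  rw [Fin.sum_univ_eq_sum_range (fun i => if i = j + 1 then a * f (i + 1) else 0),
    Fin.sum_univ_eq_sum_range (fun i => if i + 1 = j then b * f (i + 1) else 0),
    Finset.sum_ite_eq']
  congr 1
  · split_ifs with hj
    · rfl
    · have hjn : (j : ℕ) + 2 = n + 1 := by simp at hj; omega
      rw [hjn, hn, mul_zero]
  · obtain ⟨_ | k, hk⟩ := j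
    · simp [h0]
    · simp [Finset.sum_ite_eq', Nat.lt_of_succ_lt hk]

end Tridiag

noncomputable def sinSeq (r : ℂ) (θ : ℝ) (m : ℕ) : ℂ := r ^ m * Real.sin (m * θ)

theorem sinSeq_zero (r : ℂ) (θ : ℝ) : sinSeq r θ 0 = 0 := by simp [sinSeq]

theorem sinSeq_add_two {a b r : ℂ} (h : a * r ^ 2 = b) (θ : ℝ) (m : ℕ) :
    a * sinSeq r θ (m + 2) + b * sinSeq r θ m = 2 * a * r * Real.cos θ * sinSeq r θ (m + 1) := by
  simp only [sinSeq]
  push_cast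
  rw [show ((m : ℂ) + 2) * θ = (m + 1) * θ + θ by ring,
    show (m : ℂ) * θ = (m + 1) * θ - θ by ring, Complex.sin_add, Complex.sin_sub]
  linear_combination -r ^ m *
    (Complex.sin ((m + 1) * θ) * Complex.cos θ - Complex.cos ((m + 1) * θ) * Complex.sin θ) * h

noncomputable def tridiagAngle (n k : ℕ) : ℝ := (k + 1) * π / (n + 1)

theorem sinSeq_tridiagAngle_succ (r : ℂ) (n k : ℕ) :
    sinSeq r (tridiagAngle n k) (n + 1) = 0 := by
  have : ((n + 1 : ℕ) : ℝ) * tridiagAngle n k = (k + 1 : ℕ) * π := by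
    simp only [tridiagAngle]; push_cast; field_simp
  rw [sinSeq, this, Real.sin_nat_mul_pi, Complex.ofReal_zero, mul_zero]

theorem tridiagAngle_mem_Ioo {n k : ℕ} (hk : k < n) : tridiagAngle n k ∈ Set.Ioo 0 π := by
  have hk' : (k : ℝ) + 1 < n + 1 := by exact_mod_cast Nat.succ_lt_succ hk
  constructor
  · unfold tridiagAngle; positivity
  · rw [tridiagAngle, div_lt_iff₀ (by positivity)]
    nlinarith [pi_pos]

theorem injective_cos_tridiagAngle (n : ℕ) :
    Function.Injective fun k : Fin n => (Real.cos (tridiagAngle n k) : ℂ) := by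
  intro k l hkl
  have hθ : tridiagAngle n k = tridiagAngle n l :=
    injOn_cos (Set.Ioo_subset_Icc_self (tridiagAngle_mem_Ioo k.isLt))
      (Set.Ioo_subset_Icc_self (tridiagAngle_mem_Ioo l.isLt)) (Complex.ofReal_injective hkl)
  rw [tridiagAngle, tridiagAngle, div_left_inj' (by positivity), mul_left_inj' pi_ne_zero] at hθ
  exact Fin.ext (by exact_mod_cast add_right_cancel hθ)

noncomputable def tridiagEigvec (n : ℕ) (r : ℂ) (k : ℕ) : Fin n → ℂ :=
  fun j => sinSeq r (tridiagAngle n k) (j + 1)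

theorem tridiagToeplitz_mulVec_tridiagEigvec {a b r : ℂ} (h : a * r ^ 2 = b) (n k : ℕ) :
    tridiagToeplitz n a b *ᵥ tridiagEigvec n r k =
      (2 * a * r * Real.cos (tridiagAngle n k)) • tridiagEigvec n r k := by
  ext j
  unfold tridiagEigvec
  rw [tridiagToeplitz_mulVec_apply a b _ (sinSeq_zero r _) (sinSeq_tridiagAngle_succ r n k),
    sinSeq_add_two h]
  rfl

theorem tridiagEigvec_ne_zero {r : ℂ} (hr : r ≠ 0) {n k : ℕ} (hk : k < n) :
    tridiagEigvec n r k ≠ 0 := by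
  intro h
  have h0 := congrFun h ⟨0, by omega⟩
  simp only [tridiagEigvec, sinSeq, zero_add, pow_one, Nat.cast_one, one_mul, Pi.zero_apply,
    mul_eq_zero, hr, false_or, Complex.ofReal_eq_zero] at h0
  exact (sin_pos_of_mem_Ioo (tridiagAngle_mem_Ioo hk)).ne' h0

theorem tridiagEigvec_dotProduct {r r' : ℂ} (h : r * r' = 1) (n k : ℕ) :
    tridiagEigvec n r k ⬝ᵥ tridiagEigvec n r' k =
      ((∑ j : Fin n, Real.sin ((j + 1 : ℕ) * tridiagAngle n k) ^ 2 : ℝ) : ℂ) := by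
  rw [Complex.ofReal_sum]
  refine Finset.sum_congr rfl fun j _ => ?_
  have hpow : r ^ (j + 1 : ℕ) * r' ^ (j + 1 : ℕ) = 1 := by rw [← mul_pow, h, one_pow]
  simp only [tridiagEigvec, sinSeq]
  push_cast
  linear_combination Complex.sin ((j + 1) * tridiagAngle n k) ^ 2 * hpow

theorem two_div_le_sin_tridiagAngle_zero {n : ℕ} (hn : 1 ≤ n) :
    2 / (n + 1) ≤ sin (tridiagAngle n 0) := by
  have hθ : tridiagAngle n 0 = π / (n + 1) := by simp [tridiagAngle]
  have hn' : (2 : ℝ) ≤ n + 1 := by exact_mod_cast Nat.succ_le_succ hn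
  calc 2 / (n + 1 : ℝ) = 2 / π * tridiagAngle n 0 := by rw [hθ]; field_simp
    _ ≤ sin (tridiagAngle n 0) := by
      refine mul_le_sin (by rw [hθ]; positivity) ?_
      rw [hθ]
      exact div_le_div_of_nonneg_left pi_pos.le two_pos hn'

theorem sin_mul_tridiagAngle_zero (n : ℕ) :
    sin (n * tridiagAngle n 0) = sin (tridiagAngle n 0) := by
  rw [← sin_pi_sub]
  congr 1
  simp only [tridiagAngle]
  field_simp
  ring

theorem two_pow_div_succ_pow_three_le {n : ℕ} (hn : 1 ≤ n) {s R : ℝ} (hs : 2 / (n + 1) ≤ s)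
    (hR : 0 < R) (hRn : R ≤ n) : (2 : ℝ) ^ n / (n + 1) ^ 3 ≤ s / 2 * (2 ^ n * s) / R := by
  have hn' : (1 : ℝ) ≤ n := by exact_mod_cast hn
  calc (2 : ℝ) ^ n / (n + 1) ^ 3 ≤ 2 ^ n * (2 / (n + 1)) ^ 2 / (2 * n) := by
        rw [div_pow, ← mul_div_assoc, div_div, div_le_div_iff₀ (by positivity) (by positivity)]
        have hpos : (0 : ℝ) < 2 ^ n * (n + 1) ^ 2 := by positivity
        nlinarith [mul_le_mul_of_nonneg_left (by linarith : 2 * (n : ℝ) ≤ 4 * (n + 1)) hpos.le]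
    _ ≤ 2 ^ n * s ^ 2 / (2 * R) := by gcongr
    _ = s / 2 * (2 ^ n * s) / R := by field_simp

theorem two_pow_div_le_tridiagEigvec {n : ℕ} (hn : 1 ≤ n) :
    (2 : ℝ) ^ n / (n + 1) ^ 3 ≤
      ‖tridiagEigvec n 2⁻¹ 0 ⟨0, by omega⟩‖ * ‖tridiagEigvec n 2 0 ⟨n - 1, by omega⟩‖ /
        ‖tridiagEigvec n 2⁻¹ 0 ⬝ᵥ tridiagEigvec n 2 0‖ := by
  set θ := tridiagAngle n 0
  have hsin_pos : 0 < sin θ := sin_pos_of_mem_Ioo (tridiagAngle_mem_Ioo (by omega))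
  have hfirst : ‖tridiagEigvec n 2⁻¹ 0 ⟨0, by omega⟩‖ = sin θ / 2 := by
    simp only [tridiagEigvec, sinSeq, zero_add, pow_one, Nat.cast_one, one_mul, Complex.norm_mul,
      norm_inv, Complex.norm_ofNat, Complex.norm_real, norm_eq_abs, abs_of_pos hsin_pos, θ]
    ring
  have hlast : ‖tridiagEigvec n 2 0 ⟨n - 1, by omega⟩‖ = 2 ^ n * sin θ := by
    simp [tridiagEigvec, sinSeq, θ, Nat.sub_add_cancel hn, -Complex.ofReal_sin,
      sin_mul_tridiagAngle_zero, abs_of_pos hsin_pos]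
  set R := ∑ j : Fin n, sin ((j + 1 : ℕ) * θ) ^ 2
  have hdot : ‖tridiagEigvec n 2⁻¹ 0 ⬝ᵥ tridiagEigvec n 2 0‖ = R := by
    rw [tridiagEigvec_dotProduct (by norm_num), Complex.norm_real,
      Real.norm_of_nonneg (Finset.sum_nonneg fun j _ => sq_nonneg _)]
  have hR_pos : 0 < R := Finset.sum_pos' (fun j _ => sq_nonneg _)
    ⟨⟨0, by omega⟩, Finset.mem_univ _, by simpa using pow_pos hsin_pos 2⟩
  have hR_le : R ≤ n := by
    calc R ≤ ∑ _j : Fin n, (1 : ℝ) := Finset.sum_le_sum fun j _ => sin_sq_le_one _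
      _ = n := by simp
  rw [hfirst, hlast, hdot]
  exact two_pow_div_succ_pow_three_le hn (two_div_le_sin_tridiagAngle_zero hn) hR_pos hR_le

/-- The tridiagonal Toeplitz matrix `S_n` (with `1/4`'s on the subdiagonal and `1`'s on
the superdiagonal) is diagonalizable and has exponentially large eigenvector condition
number: `κ_V(S_n) ≥ 2^n / (n+1)³`. -/
theorem kappaV_tridiagonal_toeplitz_lower_bound {n : ℕ} (hn : 2 ≤ n)
    (S : Matrix (Fin n) (Fin n) ℂ)
    (hS : ∀ i j, S i j =
      if (j : ℕ) = (i : ℕ) + 1 then 1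
      else if (i : ℕ) = (j : ℕ) + 1 then 1 / 4 else 0) :
    (∃ V : Matrix (Fin n) (Fin n) ℂ, IsUnit V ∧ (V⁻¹ * S * V).IsDiag) ∧
    (2 : ℝ) ^ n / (n + 1) ^ 3 ≤ kappaV S := by
  obtain rfl : S = tridiagToeplitz n 1 (1 / 4) := Matrix.ext hS
  set μ : Fin n → ℂ := fun k => (cos (tridiagAngle n k) : ℂ)
  have hx : ∀ k : Fin n, tridiagToeplitz n 1 (1 / 4) *ᵥ tridiagEigvec n 2⁻¹ k =
      μ k • tridiagEigvec n 2⁻¹ k := fun k => by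
    rw [tridiagToeplitz_mulVec_tridiagEigvec (by norm_num)]
    norm_num [μ]
  have hy : ∀ k : Fin n, (tridiagToeplitz n 1 (1 / 4))ᵀ *ᵥ tridiagEigvec n 2 k =
      μ k • tridiagEigvec n 2 k := fun k => by
    rw [tridiagToeplitz_transpose, tridiagToeplitz_mulVec_tridiagEigvec (by norm_num)]
    norm_num [μ]
  have hx0 : ∀ k : Fin n, tridiagEigvec n 2⁻¹ k ≠ 0 := fun k =>
    tridiagEigvec_ne_zero (by norm_num) k.isLt
  have hy0 : ∀ k : Fin n, tridiagEigvec n 2 k ≠ 0 := fun k =>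
    tridiagEigvec_ne_zero two_ne_zero k.isLt
  have hμ : Function.Injective μ := injective_cos_tridiagAngle n
  refine ⟨exists_isUnit_isDiag_inv_mul_mul (linearIndependent_of_mulVec_eq_smul hμ hx hx0) hx, ?_⟩
  exact (two_pow_div_le_tridiagEigvec (by omega)).trans
    (norm_mul_norm_div_le_kappaV hμ hx hx0 hy hy0 ⟨0, by omega⟩ ⟨0, by omega⟩ ⟨n - 1, by omega⟩)
end
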